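/- arXiv:2203.01540 — 9 statements merged into one kernel-verified Lean document; each statement's English description precedes it below -/
import Mathlib

section
/- Let Φ : [0,∞) → (0,1] be a decreasing bijection and let φ = -log Φ. If the integral ∫₀¹ 1/(u·(1 ∨ log Φ⁻¹(u))) du diverges, then the series ∑_{n≥1} 1/(1 ∨ log φ⁻¹(n)) diverges. -/
open MeasureTheory Filter

/-- If `Φ : [0,∞) → (0,1]` is a decreasing bijection, `φ = -log Φ`, and the integral
`∫₀¹ du / (u · (1 ∨ log Φ⁻¹(u)))` diverges, then `∑_{n≥1} 1/(1 ∨ log φ⁻¹(n))` diverges. -/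
theorem stmt0 (Φ Φinv φinv : ℝ → ℝ)
    (hΦanti : StrictAntiOn Φ (Set.Ici 0))
    (hΦbij : Set.BijOn Φ (Set.Ici 0) (Set.Ioc 0 1))
    (hΦinv : ∀ u ∈ Set.Ioc (0:ℝ) 1, Φinv u ∈ Set.Ici (0:ℝ) ∧ Φ (Φinv u) = u)
    (hφinv : ∀ y ∈ Set.Ici (0:ℝ), φinv y ∈ Set.Ici (0:ℝ) ∧ -Real.log (Φ (φinv y)) = y)
    (hint : ∫⁻ u in Set.Ioo (0:ℝ) 1,
        ENNReal.ofReal (1 / (u * max 1 (Real.log (Φinv u)))) = ⊤) :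
    ¬ Summable (fun n : ℕ => 1 / max 1 (Real.log (φinv (n + 1)))) := by
  intro hS
  set M : ℕ → ℝ := fun n => max 1 (Real.log (φinv n)) with hMdef
  have hM1 : ∀ n, (1:ℝ) ≤ M n := fun n => le_max_left _ _
  have hMpos : ∀ n, (0:ℝ) < M n := fun n => lt_of_lt_of_le one_pos (hM1 n)
  -- shift summability
  have hS0 : Summable (fun n : ℕ => 1 / M n) := by
    rw [← summable_nat_add_iff 1]
    have : (fun n : ℕ => 1 / M (n + 1)) = fun n : ℕ => 1 / max 1 (Real.log (φinv (n + 1))) := by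
      funext n
      simp only [hMdef]
      push_cast
      ring_nf
    rw [this]
    exact hS
  -- Φinv at exp(-n) equals φinv n
  have key : ∀ n : ℕ, Φinv (Real.exp (-(n:ℝ))) = φinv n := by
    intro n
    have hn0 : (n:ℝ) ∈ Set.Ici (0:ℝ) := by simp
    obtain ⟨hφmem, hφeq⟩ := hφinv n hn0
    have hΦφ : Φ (φinv n) ∈ Set.Ioc (0:ℝ) 1 := hΦbij.mapsTo hφmem
    have hΦφe : Φ (φinv n) = Real.exp (-(n:ℝ)) := by
      have : Real.log (Φ (φinv n)) = -(n:ℝ) := by linarith [hφeq]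
      rw [← this, Real.exp_log hΦφ.1]
    have hexp : Real.exp (-(n:ℝ)) ∈ Set.Ioc (0:ℝ) 1 := by
      constructor
      · exact Real.exp_pos _
      · exact Real.exp_le_one_iff.mpr (neg_nonpos.mpr (by positivity))
    obtain ⟨hΦimem, hΦieq⟩ := hΦinv _ hexp
    apply hΦanti.injOn hΦimem hφmem
    rw [hΦieq, hΦφe]
  -- Φinv is antitone on Ioc 0 1
  have anti : ∀ u ∈ Set.Ioc (0:ℝ) 1, ∀ v ∈ Set.Ioc (0:ℝ) 1, u ≤ v → Φinv v ≤ Φinv u := by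
    intro u hu v hv huv
    by_contra h
    push_neg at h
    have := hΦanti (hΦinv u hu).1 (hΦinv v hv).1 h
    rw [(hΦinv u hu).2, (hΦinv v hv).2] at this
    linarith
  -- the covering intervals
  set S : ℕ → Set ℝ := fun n => Set.Ioc (Real.exp (-((n:ℝ)+1))) (Real.exp (-(n:ℝ))) with hSdef
  have hcover : Set.Ioo (0:ℝ) 1 ⊆ ⋃ n, S n := by
    intro u hu
    have hu0 := hu.1
    have hlogneg : Real.log u < 0 := Real.log_neg hu0 hu.2
    set t : ℝ := -Real.log u with ht
    have ht0 : 0 < t := by simp [ht]; linarith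
    refine Set.mem_iUnion.mpr ⟨⌊t⌋₊, ?_, ?_⟩
    · -- exp(-(n+1)) < u
      have h1 : t < (⌊t⌋₊ : ℝ) + 1 := Nat.lt_floor_add_one t
      have : -(((⌊t⌋₊:ℝ)) + 1) < Real.log u := by simp [ht] at h1 ⊢; linarith
      calc Real.exp (-(((⌊t⌋₊:ℝ)) + 1)) < Real.exp (Real.log u) := Real.exp_lt_exp.mpr this
        _ = u := Real.exp_log hu0
    · have h2 : ((⌊t⌋₊:ℝ)) ≤ t := Nat.floor_le ht0.le
      have : Real.log u ≤ -((⌊t⌋₊:ℝ)) := by simp [ht] at h2 ⊢; linarith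
      calc u = Real.exp (Real.log u) := (Real.exp_log hu0).symm
        _ ≤ Real.exp (-((⌊t⌋₊:ℝ))) := Real.exp_le_exp.mpr this
  -- pointwise bound on each interval
  have hbound : ∀ n : ℕ, ∀ u ∈ S n,
      1 / (u * max 1 (Real.log (Φinv u))) ≤ Real.exp ((n:ℝ)+1) / M n := by
    intro n u hu
    have hu0 : 0 < u := lt_trans (Real.exp_pos _) hu.1
    have hu1 : u ≤ 1 := hu.2.trans (Real.exp_le_one_iff.mpr (neg_nonpos.mpr (by positivity)))
    have huIoc : u ∈ Set.Ioc (0:ℝ) 1 := ⟨hu0, hu1⟩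
    have hexpn : Real.exp (-(n:ℝ)) ∈ Set.Ioc (0:ℝ) 1 :=
      ⟨Real.exp_pos _, Real.exp_le_one_iff.mpr (neg_nonpos.mpr (by positivity))⟩
    have hΦmono : φinv n ≤ Φinv u := by
      rw [← key n]; exact anti u huIoc _ hexpn hu.2
    have hA : M n ≤ max 1 (Real.log (Φinv u)) := by
      apply max_le (le_max_left _ _)
      rcases le_or_gt (φinv n) 1 with h | h
      · have hmem := (hφinv n (by simp)).1
        have : Real.log (φinv n) ≤ 0 := Real.log_nonpos hmem h
        linarith [le_max_left (1:ℝ) (Real.log (Φinv u))]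
      · have : Real.log (φinv n) ≤ Real.log (Φinv u) :=
          Real.log_le_log (by linarith) hΦmono
        exact this.trans (le_max_right _ _)
    have hA1 : (1:ℝ) ≤ max 1 (Real.log (Φinv u)) := le_max_left _ _
    have hdenom : Real.exp (-((n:ℝ)+1)) * M n ≤ u * max 1 (Real.log (Φinv u)) := by
      apply mul_le_mul hu.1.le hA (hMpos n).le hu0.le
    have hpos : 0 < Real.exp (-((n:ℝ)+1)) * M n := by positivity
    calc 1 / (u * max 1 (Real.log (Φinv u)))
        ≤ 1 / (Real.exp (-((n:ℝ)+1)) * M n) := one_div_le_one_div_of_le hpos hdenom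
      _ = Real.exp ((n:ℝ)+1) / M n := by
          rw [Real.exp_neg]
          field_simp
  -- bound each piece of the integral
  have hpiece : ∀ n : ℕ,
      (∫⁻ u in S n, ENNReal.ofReal (1 / (u * max 1 (Real.log (Φinv u)))))
        ≤ ENNReal.ofReal ((Real.exp 1 - 1) / M n) := by
    intro n
    have step1 : (∫⁻ u in S n, ENNReal.ofReal (1 / (u * max 1 (Real.log (Φinv u)))))
        ≤ ∫⁻ _ in S n, ENNReal.ofReal (Real.exp ((n:ℝ)+1) / M n) := by
      apply setLIntegral_mono measurable_const
      intro u hu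
      exact ENNReal.ofReal_le_ofReal (hbound n u hu)
    refine step1.trans ?_
    rw [setLIntegral_const]
    rw [hSdef]
    simp only [Real.volume_Ioc]
    rw [← ENNReal.ofReal_mul (by positivity)]
    apply ENNReal.ofReal_le_ofReal
    have e1 : Real.exp ((n:ℝ)+1) * Real.exp (-(n:ℝ)) = Real.exp 1 := by
      rw [← Real.exp_add]; ring_nf
    have e2 : Real.exp ((n:ℝ)+1) * Real.exp (-((n:ℝ)+1)) = 1 := by
      rw [← Real.exp_add]; ring_nf; exact Real.exp_zero
    rw [div_mul_eq_mul_div, mul_sub, e1, e2]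
  -- summability of the bounds
  have hsum : Summable (fun n : ℕ => (Real.exp 1 - 1) / M n) := by
    have := hS0.mul_left (Real.exp 1 - 1)
    simpa [div_eq_mul_inv, mul_comm, mul_assoc, one_div] using this
  have hnonneg : ∀ n : ℕ, 0 ≤ (Real.exp 1 - 1) / M n := by
    intro n
    have : (1:ℝ) ≤ Real.exp 1 := by
      have := Real.add_one_le_exp (1:ℝ); linarith
    exact div_nonneg (by linarith) (hMpos n).le
  have htsum : (∑' n : ℕ, ENNReal.ofReal ((Real.exp 1 - 1) / M n)) ≠ ⊤ := by
    rw [← ENNReal.ofReal_tsum_of_nonneg hnonneg hsum]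
    exact ENNReal.ofReal_ne_top
  -- conclude
  have hfin : (∫⁻ u in Set.Ioo (0:ℝ) 1,
      ENNReal.ofReal (1 / (u * max 1 (Real.log (Φinv u))))) ≠ ⊤ := by
    have h1 : (∫⁻ u in Set.Ioo (0:ℝ) 1,
        ENNReal.ofReal (1 / (u * max 1 (Real.log (Φinv u)))))
        ≤ ∫⁻ u in ⋃ n, S n, ENNReal.ofReal (1 / (u * max 1 (Real.log (Φinv u)))) :=
      lintegral_mono_set hcover
    have h2 : (∫⁻ u in ⋃ n, S n, ENNReal.ofReal (1 / (u * max 1 (Real.log (Φinv u)))))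
        ≤ ∑' n, ∫⁻ u in S n, ENNReal.ofReal (1 / (u * max 1 (Real.log (Φinv u)))) :=
      lintegral_iUnion_le _ _
    have h3 : (∑' n, ∫⁻ u in S n, ENNReal.ofReal (1 / (u * max 1 (Real.log (Φinv u)))))
        ≤ ∑' n : ℕ, ENNReal.ofReal ((Real.exp 1 - 1) / M n) :=
      ENNReal.tsum_le_tsum hpiece
    exact ne_top_of_le_ne_top htsum (h1.trans (h2.trans h3))
  exact hfin hint
end

section
/- Let f : ℕ → [0,∞) be a decreasing function with ∑_{n≥1} f(n) = ∞, and let A ⊆ ℕ have positive lower density. Then liminf_{N→∞} (∑_{n=1}^N 1(n∈A)·f(n)) / (∑_{n=1}^N f(n)) > 0. -/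
open Filter

/-- If `f : ℕ → [0,∞)` is decreasing with divergent sum and `A ⊆ ℕ` has positive lower
density, then `liminf_N (∑_{n=1}^N 1(n∈A) f(n)) / (∑_{n=1}^N f(n)) > 0`. -/
theorem stmt2 (f : ℕ → ℝ) (hf0 : ∀ n, 0 ≤ f n) (hfanti : Antitone f)
    (hfdiv : ¬ Summable f) (A : Set ℕ)
    (hdens : 0 < liminf (fun N : ℕ =>
      (∑ n ∈ Finset.Icc 1 N, A.indicator (fun _ => (1:ℝ)) n) / N) atTop) :
    0 < liminf (fun N : ℕ =>
      (∑ n ∈ Finset.Icc 1 N, A.indicator f n) / (∑ n ∈ Finset.Icc 1 N, f n)) atTop := by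
  set C : ℕ → ℝ := fun N => ∑ n ∈ Finset.Icc 1 N, A.indicator (fun _ => (1:ℝ)) n with hCdef
  set S : ℕ → ℝ := fun N => ∑ n ∈ Finset.Icc 1 N, f n with hSdef
  set T : ℕ → ℝ := fun N => ∑ n ∈ Finset.Icc 1 N, A.indicator f n with hTdef
  have hC0 : ∀ N, 0 ≤ C N := fun N =>
    Finset.sum_nonneg fun n _ => Set.indicator_nonneg (fun _ _ => zero_le_one) n
  have hS0 : ∀ N, 0 ≤ S N := fun N => Finset.sum_nonneg fun n _ => hf0 n
  -- pick a density lower bound c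
  have hdens' : 0 < liminf (fun N : ℕ => C N / N) atTop := hdens
  set c : ℝ := liminf (fun N : ℕ => C N / N) atTop / 2 with hcdef
  have hc0 : 0 < c := half_pos hdens'
  have hcev : ∀ᶠ N : ℕ in atTop, c < C N / N := by
    apply eventually_lt_of_lt_liminf
    · rw [hcdef]; linarith
    · exact isBoundedUnder_of_eventually_ge
        (Eventually.of_forall fun N => div_nonneg (hC0 N) (Nat.cast_nonneg N))
  obtain ⟨N₀, hN₀⟩ := eventually_atTop.1 hcev
  set M : ℕ := max N₀ 1 with hMdef
  set K : ℝ := c * M with hKdef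
  have hK0 : 0 ≤ K := by positivity
  -- uniform lower bound C n ≥ c n - K
  have hB : ∀ n : ℕ, 0 ≤ C n - c * n + K := by
    intro n
    rcases le_or_gt M n with h | h
    · have h1 : c < C n / n := hN₀ n (le_trans (le_max_left _ _) h)
      have hn1 : (1:ℕ) ≤ n := le_trans (le_max_right _ _) h
      have hnpos : (0:ℝ) < n := by exact_mod_cast hn1
      have : c * n < C n := by
        rw [lt_div_iff₀ hnpos] at h1; linarith
      linarith
    · have : (n:ℝ) ≤ M := by exact_mod_cast h.le
      have : c * n ≤ c * M := by
        apply mul_le_mul_of_nonneg_left this hc0.le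
      have := hC0 n
      rw [hKdef]; linarith
  -- key Abel-type inequality by induction
  have key : ∀ N : ℕ, c * S N - K * f 1 + (C N - c * N + K) * f (N + 1) ≤ T N := by
    intro N
    induction N with
    | zero => simp [hCdef, hSdef, hTdef]
    | succ N ih =>
      have hins : Finset.Icc 1 (N + 1) = insert (N + 1) (Finset.Icc 1 N) := by
        ext x; simp [Finset.mem_Icc, Finset.mem_insert]; omega
      have hsum : ∀ g : ℕ → ℝ, ∑ n ∈ Finset.Icc 1 (N + 1), g n
          = (∑ n ∈ Finset.Icc 1 N, g n) + g (N + 1) := by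
        intro g
        rw [hins, Finset.sum_insert (by simp)]; ring
      have hCs : C (N + 1) = C N + A.indicator (fun _ => (1:ℝ)) (N + 1) := hsum _
      have hSs : S (N + 1) = S N + f (N + 1) := hsum _
      have hTs : T (N + 1) = T N + A.indicator f (N + 1) := hsum _
      have hind : A.indicator f (N + 1) = A.indicator (fun _ => (1:ℝ)) (N + 1) * f (N + 1) := by
        by_cases h : N + 1 ∈ A <;> simp [h]
      have hB' : 0 ≤ C (N + 1) - c * ((N:ℝ) + 1) + K := by
        have := hB (N + 1); push_cast at this; linarith
      have hcoef : (C (N + 1) - c * ((N:ℝ) + 1) + K) * f (N + 2)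
          ≤ (C (N + 1) - c * ((N:ℝ) + 1) + K) * f (N + 1) :=
        mul_le_mul_of_nonneg_left (hfanti (by omega)) hB'
      rw [hTs, hSs, hind]
      push_cast
      have hexp : c * (S N + f (N + 1)) - K * f 1
          + (C (N + 1) - c * ((N:ℝ) + 1) + K) * f (N + 1)
          = (c * S N - K * f 1 + (C N - c * N + K) * f (N + 1))
            + A.indicator (fun _ => (1:ℝ)) (N + 1) * f (N + 1) := by
        rw [hCs]; ring
      have h2 : c * (S N + f (N + 1)) - K * f 1
          + (C (N + 1) - c * ((N:ℝ) + 1) + K) * f (N + 2)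
          ≤ (c * S N - K * f 1 + (C N - c * N + K) * f (N + 1))
            + A.indicator (fun _ => (1:ℝ)) (N + 1) * f (N + 1) := by
        rw [← hexp]; linarith
      linarith [ih]
  have hTlow : ∀ N : ℕ, c * S N - K * f 1 ≤ T N := by
    intro N
    have h1 := key N
    have h2 : 0 ≤ (C N - c * N + K) * f (N + 1) := mul_nonneg (hB N) (hf0 _)
    linarith
  -- S tends to infinity
  have hStend : Tendsto S atTop atTop := by
    have h1 : Tendsto (fun n => ∑ i ∈ Finset.range n, f i) atTop atTop :=
      (not_summable_iff_tendsto_nat_atTop_of_nonneg hf0).1 hfdiv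
    have h2 : Tendsto (fun N : ℕ => ∑ i ∈ Finset.range (N + 1), f i) atTop atTop :=
      h1.comp (tendsto_add_atTop_nat 1)
    have h3 : ∀ N : ℕ, S N = (∑ i ∈ Finset.range (N + 1), f i) - f 0 := by
      intro N
      have e1 : S N = ∑ i ∈ Finset.range N, f (i + 1) := by
        rw [hSdef]
        simp only []
        rw [← Finset.Ico_add_one_right_eq_Icc, Finset.sum_Ico_eq_sum_range]
        simp [add_comm]
      have e2 : ∑ i ∈ Finset.range (N + 1), f i
          = (∑ i ∈ Finset.range N, f (i + 1)) + f 0 := Finset.sum_range_succ' f N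
      rw [e1, e2]; ring
    have h4 : Tendsto (fun N : ℕ => (∑ i ∈ Finset.range (N + 1), f i) - f 0) atTop atTop :=
      h2.atTop_add tendsto_const_nhds
    exact h4.congr fun N => (h3 N).symm
  -- eventual lower bound on the ratio
  have hev : ∀ᶠ N : ℕ in atTop, c / 2 ≤ T N / S N := by
    have h1 : ∀ᶠ N : ℕ in atTop, 2 / c * (K * f 1) + 1 ≤ S N :=
      hStend.eventually_ge_atTop _
    filter_upwards [h1] with N hN
    have hKf : 0 ≤ K * f 1 := mul_nonneg hK0 (hf0 1)
    have hSpos : 0 < S N := by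
      have : 0 ≤ 2 / c * (K * f 1) := by positivity
      linarith
    rw [le_div_iff₀ hSpos]
    have heq : c / 2 * (2 / c * (K * f 1) + 1) = K * f 1 + c / 2 := by
      field_simp
    have h5 : c / 2 * (2 / c * (K * f 1) + 1) ≤ c / 2 * S N :=
      mul_le_mul_of_nonneg_left hN (by positivity)
    have h6 : K * f 1 ≤ c / 2 * S N := by
      rw [heq] at h5; linarith
    have := hTlow N
    nlinarith [hS0 N]
  -- cobounded
  have hcob : IsCoboundedUnder (· ≥ ·) atTop (fun N => T N / S N) := by
    apply isCoboundedUnder_ge_of_eventually_le atTop (x := 1)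
    have h1 : ∀ᶠ N : ℕ in atTop, (1:ℝ) ≤ S N := hStend.eventually_ge_atTop _
    filter_upwards [h1] with N hN
    have hTS : T N ≤ S N := by
      apply Finset.sum_le_sum
      intro n _
      exact Set.indicator_le_self' (fun n _ => hf0 n) n
    rw [div_le_one (by linarith)]
    exact hTS
  calc (0:ℝ) < c / 2 := by positivity
    _ ≤ liminf (fun N => T N / S N) atTop := le_liminf_of_le hcob hev
end

section
/- Let f : ℕ → [0,∞) be a decreasing function with ∑_{n≥1} f(n) = ∞. Then there exists a strictly increasing function a : ℕ → ℕ with lim_{n→∞} (a(n) − a(n−1)) = ∞ such that ∑_{n≥1} f(a(n)) = ∞. -/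
/-!
Choose the gaps adaptively: `a (n + 1) - a n = ⌊∑_{i ≤ n} f (a i)⌋ + 1`. If `∑ f (a n)` converged,
the gaps would be bounded by some `K`, and since `f` is decreasing each block
`∑_{a n ≤ m < a (n + 1)} f m` is at most `K f (a n)`; summing the blocks would make `∑ f` converge.
So `∑ f (a n)` diverges, its partial sums tend to infinity, and with them the gaps.
-/

open Filter Finset

theorem Antitone.summable_of_summable_comp_of_sub_le {f : ℕ → ℝ} (hf0 : ∀ n, 0 ≤ f n)
    (hf : Antitone f) {u : ℕ → ℕ} (hu : StrictMono u) (hu0 : 0 < u 0) {K : ℕ}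
    (hK : ∀ n, u (n + 1) - u n ≤ K) (hsum : Summable (fun n => f (u n))) : Summable f := by
  have h_pos : ∀ n, 0 < u n := fun n => hu0.trans_le (hu.monotone n.zero_le)
  refine summable_of_sum_range_le hf0 (c := ∑ m ∈ range (u 0), f m + K * ∑' n, f (u n))
    fun N => ?_
  calc ∑ m ∈ range N, f m
      ≤ ∑ m ∈ range (u N), f m :=
        sum_le_sum_of_subset_of_nonneg (range_subset_range.mpr (hu.id_le N))
          fun m _ _ => hf0 m
    _ = ∑ m ∈ range (u 0), f m + ∑ m ∈ Ico (u 0) (u N), f m :=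
        (sum_range_add_sum_Ico f (hu.monotone N.zero_le)).symm
    _ ≤ ∑ m ∈ range (u 0), f m + ∑ n ∈ range N, (u (n + 1) - u n) • f (u n) := by
        gcongr
        exact le_sum_schlomilch' (fun _ _ _ hmn => hf hmn) h_pos hu.monotone N
    _ ≤ ∑ m ∈ range (u 0), f m + ∑ n ∈ range N, K * f (u n) := by
        gcongr with n
        rw [nsmul_eq_mul]
        exact mul_le_mul_of_nonneg_right (by exact_mod_cast hK n) (hf0 _)
    _ ≤ ∑ m ∈ range (u 0), f m + K * ∑' n, f (u n) := by
        rw [← mul_sum]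
        gcongr
        exact hsum.sum_le_tsum _ fun n _ => hf0 _

/-- `(sparsePair f n).1` is the `n`-th point `a n` of the sparse sequence and
`(sparsePair f n).2` is the partial sum `∑_{i ≤ n} f (a i)`. -/
noncomputable def sparsePair (f : ℕ → ℝ) : ℕ → ℕ × ℝ
  | 0 => (1, f 1)
  | n + 1 =>
      let a := (sparsePair f n).1 + (⌊(sparsePair f n).2⌋₊ + 1)
      (a, (sparsePair f n).2 + f a)

noncomputable def sparseSeq (f : ℕ → ℝ) (n : ℕ) : ℕ := (sparsePair f n).1

theorem sparsePair_snd (f : ℕ → ℝ) (n : ℕ) :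
    (sparsePair f n).2 = ∑ i ∈ range (n + 1), f (sparseSeq f i) := by
  induction n with
  | zero => simp [sparsePair, sparseSeq]
  | succ n ih => rw [sum_range_succ, ← ih]; rfl

theorem sparseSeq_succ_sub (f : ℕ → ℝ) (n : ℕ) :
    sparseSeq f (n + 1) - sparseSeq f n = ⌊∑ i ∈ range (n + 1), f (sparseSeq f i)⌋₊ + 1 := by
  rw [← sparsePair_snd]
  exact Nat.add_sub_cancel_left ..

theorem strictMono_sparseSeq (f : ℕ → ℝ) : StrictMono (sparseSeq f) :=
  strictMono_nat_of_lt_succ fun n => Nat.lt_of_sub_pos (by rw [sparseSeq_succ_sub]; omega)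

theorem Antitone.not_summable_comp_sparseSeq {f : ℕ → ℝ} (hf0 : ∀ n, 0 ≤ f n)
    (hf : Antitone f) (hfdiv : ¬ Summable f) : ¬ Summable (fun n => f (sparseSeq f n)) := by
  intro hsum
  refine hfdiv (hf.summable_of_summable_comp_of_sub_le hf0 (strictMono_sparseSeq f)
    Nat.one_pos (K := ⌊∑' n, f (sparseSeq f n)⌋₊ + 1) (fun n => ?_) hsum)
  rw [sparseSeq_succ_sub]
  gcongr
  exact hsum.sum_le_tsum _ fun i _ => hf0 _

theorem tendsto_sparseSeq_succ_sub {f : ℕ → ℝ} (hf0 : ∀ n, 0 ≤ f n)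
    (hdiv : ¬ Summable (fun n => f (sparseSeq f n))) :
    Tendsto (fun n => sparseSeq f (n + 1) - sparseSeq f n) atTop atTop := by
  simp only [sparseSeq_succ_sub]
  have hpartial := (not_summable_iff_tendsto_nat_atTop_of_nonneg fun n => hf0 _).mp hdiv
  exact tendsto_atTop_mono (fun _ => Nat.le_succ _)
    (tendsto_nat_floor_atTop.comp (hpartial.comp (tendsto_add_atTop_nat 1)))

/-- If `f : ℕ → [0,∞)` is decreasing with divergent sum, then there exists a strictly
increasing `a : ℕ → ℕ` whose increments tend to infinity such that `∑ f(a(n)) = ∞`. -/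
theorem stmt3 (f : ℕ → ℝ) (hf0 : ∀ n, 0 ≤ f n) (hfanti : Antitone f)
    (hfdiv : ¬ Summable f) :
    ∃ a : ℕ → ℕ, StrictMono a ∧
      Tendsto (fun n => a (n + 1) - a n) atTop atTop ∧
      ¬ Summable (fun n => f (a n)) := by
  have hdiv := hfanti.not_summable_comp_sparseSeq hf0 hfdiv
  exact ⟨sparseSeq f, strictMono_sparseSeq f, tendsto_sparseSeq_succ_sub hf0 hdiv, hdiv⟩
end

section
/- Let φ : [0,∞) → [0,∞) be an increasing bijection with ∑_{k≥1} 1/(1 ∨ log φ⁻¹(k)) = ∞, and define φ̃ = min{φ(x), √x}. Then ∑_{k≥1} 1/(1 ∨ log φ̃⁻¹(k)) = ∞. -/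
open Filter

/-- For an antitone nonnegative summable sequence, `n * f n → 0`. -/
lemma stmt4_aux_nat_mul (f : ℕ → ℝ) (hanti : Antitone f) (h0 : ∀ n, 0 ≤ f n)
    (hs : Summable f) : Tendsto (fun n : ℕ => (n : ℝ) * f n) atTop (nhds 0) := by
  rw [Metric.tendsto_atTop]
  intro ε hε
  -- tails tend to zero
  have htail : Tendsto (fun i => ∑' k, f (k + i)) atTop (nhds 0) :=
    tendsto_sum_nat_add f
  rw [Metric.tendsto_atTop] at htail
  obtain ⟨N, hN⟩ := htail (ε / 4) (by linarith)
  refine ⟨2 * N + 2, fun n hn => ?_⟩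
  have hn2 : 2 * N + 2 ≤ n := hn
  have hNn : N ≤ n := by omega
  -- sum over Ico N n bounds (n - N) * f n
  have hsum' : Summable fun k => f (k + N) := (summable_nat_add_iff N).mpr hs
  have hcard : ((n - N : ℕ) : ℝ) * f n ≤ ∑ i ∈ Finset.Ico N n, f i := by
    have := Finset.card_nsmul_le_sum (Finset.Ico N n) f (f n)
      (fun i hi => hanti (Finset.mem_Ico.mp hi).2.le)
    simpa [Nat.card_Ico, nsmul_eq_mul] using this
  have hico : ∑ i ∈ Finset.Ico N n, f i ≤ ∑' k, f (k + N) := by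
    have : ∑ i ∈ Finset.Ico N n, f i = ∑ j ∈ Finset.range (n - N), f (j + N) := by
      rw [Finset.sum_Ico_eq_sum_range]
      exact Finset.sum_congr rfl fun j _ => by ring_nf
    rw [this]
    exact Summable.sum_le_tsum (Finset.range (n - N)) (fun i _ => h0 _) hsum'
  have htailN : ∑' k, f (k + N) < ε / 4 := by
    have hnn : (0:ℝ) ≤ ∑' k, f (k + N) := tsum_nonneg fun k => h0 (k + N)
    have h := hN N le_rfl
    rw [Real.dist_eq, sub_zero, abs_of_nonneg hnn] at h
    exact h
  have hfn : 0 ≤ f n := h0 n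
  have h1 : ((n - N : ℕ) : ℝ) * f n < ε / 4 := lt_of_le_of_lt (hcard.trans hico) htailN
  have hcast : ((n - N : ℕ) : ℝ) = (n : ℝ) - (N : ℝ) := by
    rw [Nat.cast_sub hNn]
  have hhalf : (n : ℝ) ≤ 2 * ((n : ℝ) - (N : ℝ)) := by
    have : (2 * N : ℕ) ≤ n := by omega
    have : (2 * (N : ℝ)) ≤ (n : ℝ) := by exact_mod_cast this
    linarith
  rw [Real.dist_eq, sub_zero, abs_of_nonneg (by positivity)]
  have : (n : ℝ) * f n ≤ 2 * (((n : ℝ) - (N : ℝ)) * f n) := by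
    have := mul_le_mul_of_nonneg_right hhalf hfn
    linarith [this]
  rw [hcast] at h1
  linarith

/-- If `φ : [0,∞) → [0,∞)` is an increasing bijection with
`∑_{k≥1} 1/(1 ∨ log φ⁻¹(k)) = ∞`, and `φ̃(x) = min(φ(x), √x)`,
then `∑_{k≥1} 1/(1 ∨ log φ̃⁻¹(k)) = ∞`. -/
theorem stmt4 (φ φinv ψinv : ℝ → ℝ)
    (hφmono : StrictMonoOn φ (Set.Ici 0))
    (hφbij : Set.BijOn φ (Set.Ici 0) (Set.Ici 0))
    (hφinv : ∀ y ∈ Set.Ici (0:ℝ), φinv y ∈ Set.Ici (0:ℝ) ∧ φ (φinv y) = y)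
    (hψinv : ∀ y ∈ Set.Ici (0:ℝ), ψinv y ∈ Set.Ici (0:ℝ) ∧
      min (φ (ψinv y)) (Real.sqrt (ψinv y)) = y)
    (hdiv : ¬ Summable (fun k : ℕ => 1 / max 1 (Real.log (φinv (k + 1))))) :
    ¬ Summable (fun k : ℕ => 1 / max 1 (Real.log (ψinv (k + 1)))) := by
  intro hsum
  set a : ℕ → ℝ := fun k => 1 / max 1 (Real.log (φinv ((k : ℝ) + 1))) with ha
  set c : ℕ → ℝ := fun k => 1 / max 1 (Real.log (((k : ℝ) + 1) ^ 2)) with hc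
  set m : ℕ → ℝ := fun k => min (a k) (c k) with hm
  -- basic positivity
  have hA1 : ∀ k : ℕ, (1:ℝ) ≤ max 1 (Real.log (φinv ((k : ℝ) + 1))) := fun k => le_max_left _ _
  have hC1 : ∀ k : ℕ, (1:ℝ) ≤ max 1 (Real.log (((k : ℝ) + 1) ^ 2)) := fun k => le_max_left _ _
  have hy0 : ∀ k : ℕ, (0:ℝ) ≤ (k : ℝ) + 1 := fun k => by positivity
  have hy1 : ∀ k : ℕ, (1:ℝ) ≤ (k : ℝ) + 1 := fun k => by
    have : (0:ℝ) ≤ (k : ℝ) := Nat.cast_nonneg k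
    linarith
  -- monotonicity of φinv
  have hφinvmono : ∀ y z : ℝ, 0 ≤ y → y ≤ z → φinv y ≤ φinv z := by
    intro y z hy hyz
    obtain ⟨hy', hyy⟩ := hφinv y hy
    obtain ⟨hz', hzz⟩ := hφinv z (le_trans hy hyz)
    by_contra h
    push_neg at h
    have := hφmono hz' hy' h
    rw [hyy, hzz] at this
    linarith
  -- monotonicity of x ↦ max 1 (log x) on [0,∞)
  have hmaxlog : ∀ x z : ℝ, 0 ≤ x → x ≤ z →
      max 1 (Real.log x) ≤ max 1 (Real.log z) := by
    intro x z hx hxz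
    apply max_le (le_max_left _ _)
    rcases le_or_gt x 1 with h | h
    · exact le_trans (Real.log_nonpos hx h) (le_trans zero_le_one (le_max_left _ _))
    · exact le_trans (Real.log_le_log (lt_trans one_pos h) hxz) (le_max_right _ _)
  -- key bound : ψinv y ≤ max (φinv y) (y^2)
  have hψle : ∀ k : ℕ, ψinv ((k : ℝ) + 1) ≤ max (φinv ((k : ℝ) + 1)) (((k : ℝ) + 1) ^ 2) := by
    intro k
    set y : ℝ := (k : ℝ) + 1
    obtain ⟨hx0, hmin⟩ := hψinv y (hy0 k)
    rcases min_cases (φ (ψinv y)) (Real.sqrt (ψinv y)) with ⟨h1, _⟩ | ⟨h1, _⟩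
    · -- φ (ψinv y) = y, so ψinv y = φinv y
      rw [h1] at hmin
      obtain ⟨hi0, hii⟩ := hφinv y (hy0 k)
      have : ψinv y = φinv y := hφbij.injOn hx0 hi0 (by rw [hmin, hii])
      rw [this]; exact le_max_left _ _
    · -- sqrt (ψinv y) = y, so ψinv y = y^2
      rw [h1] at hmin
      have h2 := Real.sq_sqrt (show (0:ℝ) ≤ ψinv y from hx0)
      rw [hmin] at h2
      rw [← h2]; exact le_max_right _ _
  -- m k ≤ the ψ series term
  have hmt : ∀ k : ℕ, m k ≤ 1 / max 1 (Real.log (ψinv ((k : ℝ) + 1))) := by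
    intro k
    set y : ℝ := (k : ℝ) + 1
    set A : ℝ := max 1 (Real.log (φinv y))
    set C : ℝ := max 1 (Real.log (y ^ 2))
    set D : ℝ := max 1 (Real.log (ψinv y))
    have hA0 : (0:ℝ) < A := lt_of_lt_of_le one_pos (hA1 k)
    have hC0 : (0:ℝ) < C := lt_of_lt_of_le one_pos (hC1 k)
    have hD0 : (0:ℝ) < D := lt_of_lt_of_le one_pos (le_max_left _ _)
    have hDle : D ≤ max A C := by
      have h0' : (0 : ℝ) ≤ ψinv y := (hψinv y (hy0 k)).1
      have := hmaxlog (ψinv y) (max (φinv y) (y ^ 2)) h0' (hψle k)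
      refine le_trans this ?_
      rcases max_cases (φinv y) (y ^ 2) with ⟨he, _⟩ | ⟨he, _⟩
      · rw [he]; exact le_max_left _ _
      · rw [he]; exact le_max_right _ _
    have : 1 / max A C ≤ 1 / D :=
      one_div_le_one_div_of_le hD0 hDle
    refine le_trans ?_ this
    rcases le_total A C with h | h
    · rw [max_eq_right h]
      exact min_le_right _ _
    · rw [max_eq_left h]
      exact min_le_left _ _
  have hm0 : ∀ k, 0 ≤ m k := by
    intro k
    apply le_min
    · exact le_of_lt (by positivity : (0:ℝ) < 1 / max 1 (Real.log (φinv ((k : ℝ) + 1))))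
    · exact le_of_lt (by positivity : (0:ℝ) < 1 / max 1 (Real.log (((k : ℝ) + 1) ^ 2)))
  have hmsum : Summable m := by
    refine Summable.of_nonneg_of_le hm0 hmt ?_
    exact_mod_cast hsum
  -- m is antitone
  have hmanti : Antitone m := by
    intro i j hij
    have hcast : (i : ℝ) + 1 ≤ (j : ℝ) + 1 := by
      have : (i : ℝ) ≤ (j : ℝ) := Nat.cast_le.mpr hij
      linarith
    apply min_le_min
    · apply one_div_le_one_div_of_le (lt_of_lt_of_le one_pos (hA1 i))
      exact hmaxlog _ _ ((hφinv _ (hy0 i)).1) (hφinvmono _ _ (hy0 i) hcast)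
    · apply one_div_le_one_div_of_le (lt_of_lt_of_le one_pos (hC1 i))
      apply hmaxlog _ _ (by positivity)
      have := hy0 i
      nlinarith
  -- (n+1) * m n → 0
  have hk0 : Tendsto (fun n : ℕ => (n : ℝ) * m n) atTop (nhds 0) :=
    stmt4_aux_nat_mul m hmanti hm0 hmsum
  have hmzero : Tendsto m atTop (nhds 0) := hmsum.tendsto_atTop_zero
  have hk1 : Tendsto (fun n : ℕ => ((n : ℝ) + 1) * m n) atTop (nhds 0) := by
    have := hk0.add hmzero
    simpa [add_mul] using this
  -- C n / (n+1) → 0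
  have hlog : Tendsto (fun n : ℕ => Real.log ((n : ℝ) + 1) / ((n : ℝ) + 1)) atTop (nhds 0) := by
    have h1 : Tendsto (fun x : ℝ => Real.log x / x) atTop (nhds 0) :=
      Real.isLittleO_log_id_atTop.tendsto_div_nhds_zero
    have h2 : Tendsto (fun n : ℕ => (n : ℝ) + 1) atTop atTop :=
      tendsto_atTop_add_const_right _ _ tendsto_natCast_atTop_atTop
    exact h1.comp h2
  have hCdiv : Tendsto (fun n : ℕ => max 1 (Real.log (((n : ℝ) + 1) ^ 2)) / ((n : ℝ) + 1))
      atTop (nhds 0) := by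
    apply squeeze_zero (g := fun n : ℕ => 1 / ((n : ℝ) + 1) + 2 * (Real.log ((n : ℝ) + 1) / ((n : ℝ) + 1)))
    · intro n
      have := hC1 n
      positivity
    · intro n
      have hlog2 : Real.log (((n : ℝ) + 1) ^ 2) = 2 * Real.log ((n : ℝ) + 1) := by
        rw [Real.log_pow]; push_cast; ring
      have hlogpos : 0 ≤ Real.log ((n : ℝ) + 1) := Real.log_nonneg (hy1 n)
      have hmax : max 1 (Real.log (((n : ℝ) + 1) ^ 2)) ≤ 1 + 2 * Real.log ((n : ℝ) + 1) := by
        rw [hlog2]; apply max_le <;> linarith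
      have hpos : (0:ℝ) < (n : ℝ) + 1 := lt_of_lt_of_le one_pos (hy1 n)
      calc max 1 (Real.log (((n : ℝ) + 1) ^ 2)) / ((n : ℝ) + 1)
          ≤ (1 + 2 * Real.log ((n : ℝ) + 1)) / ((n : ℝ) + 1) := by gcongr
        _ = 1 / ((n : ℝ) + 1) + 2 * (Real.log ((n : ℝ) + 1) / ((n : ℝ) + 1)) := by ring
    · have h0 : Tendsto (fun n : ℕ => 1 / ((n : ℝ) + 1)) atTop (nhds 0) :=
        tendsto_one_div_add_atTop_nhds_zero_nat
      have := h0.add (hlog.const_mul 2)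
      simpa using this
  -- m n * C n → 0
  have hmc : Tendsto (fun n : ℕ => m n * max 1 (Real.log (((n : ℝ) + 1) ^ 2)))
      atTop (nhds 0) := by
    have := hk1.mul hCdiv
    rw [mul_zero] at this
    apply this.congr
    intro n
    have hpos : ((n : ℝ) + 1) ≠ 0 := ne_of_gt (lt_of_lt_of_le one_pos (hy1 n))
    field_simp
  -- eventually m n = a n
  have hev : ∀ᶠ n in atTop, m n = a n := by
    filter_upwards [hmc.eventually (gt_mem_nhds one_pos)] with n hn
    have hC0 : (0:ℝ) < max 1 (Real.log (((n : ℝ) + 1) ^ 2)) := lt_of_lt_of_le one_pos (hC1 n)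
    have hmn : m n < c n := by
      show m n < 1 / _
      rw [lt_div_iff₀ hC0]
      exact hn
    rcases le_total (a n) (c n) with h | h
    · show min (a n) (c n) = a n
      exact min_eq_left h
    · exfalso
      have he : m n = c n := min_eq_right h
      rw [he] at hmn
      exact lt_irrefl _ hmn
  obtain ⟨N, hN⟩ := eventually_atTop.mp hev
  -- deduce summability of a
  have hsa : Summable (fun n : ℕ => a (n + N)) := by
    apply ((summable_nat_add_iff N).mpr hmsum).congr
    intro n
    exact hN (n + N) (Nat.le_add_left N n)
  have : Summable a := (summable_nat_add_iff N).mp hsa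
  exact hdiv (by exact_mod_cast this)
end

section
/- If (E_n)_{n≥0} is an increasing sequence of events in a probability space with E_0 = ∅ and ∑_{n≥1} P(E_n | E_{n−1}^c) = ∞ (where terms with P(E_{n−1}^c)=0 are interpreted as 0 and the sum still diverges), then P(⋃_{n≥1} E_n) = 1. -/
/-!
If `P((⋃ Eₙ)ᶜ) = c > 0`, then `P(Eₙᶜ) ≥ c` for every `n`, so the `n`-th term of the series is at
most `P(Eₙ₊₁ \ Eₙ) / c`. The increments `Eₙ₊₁ \ Eₙ` are disjoint, hence the series is bounded
by `1 / c < ∞`.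
-/

open MeasureTheory ENNReal

theorem Monotone.tsum_measure_diff_succ_le_measure_univ {Ω : Type*} [MeasurableSpace Ω]
    (μ : Measure Ω) {E : ℕ → Set Ω} (hmeas : ∀ n, MeasurableSet (E n)) (hmono : Monotone E) :
    ∑' n, μ (E (n + 1) \ E n) ≤ μ Set.univ := by
  simp_rw [← hmono.disjointed_add_one]
  exact tsum_measure_le_measure_univ (fun n ↦ (MeasurableSet.disjointed hmeas _).nullMeasurableSet)
    (((disjoint_disjointed E).comp_of_injective (add_left_injective 1)).mono
      fun _ _ h ↦ h.aedisjoint)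

theorem Monotone.measure_compl_iUnion_eq_zero_of_tsum_div_eq_top {Ω : Type*} [MeasurableSpace Ω]
    (μ : Measure Ω) [IsFiniteMeasure μ] {E : ℕ → Set Ω} (hmeas : ∀ n, MeasurableSet (E n))
    (hmono : Monotone E) (hdiv : ∑' n, μ (E (n + 1) \ E n) / μ (E n)ᶜ = ∞) :
    μ (⋃ n, E n)ᶜ = 0 := by
  set c := μ (⋃ n, E n)ᶜ
  by_contra hc
  have hterm : ∀ n, μ (E (n + 1) \ E n) / μ (E n)ᶜ ≤ μ (E (n + 1) \ E n) / c := fun n ↦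
    ENNReal.div_le_div_left (measure_mono (Set.compl_subset_compl.2 (Set.subset_iUnion E n))) _
  have : ∞ < ∞ := calc
    ∞ = ∑' n, μ (E (n + 1) \ E n) / μ (E n)ᶜ := hdiv.symm
    _ ≤ ∑' n, μ (E (n + 1) \ E n) / c := ENNReal.tsum_le_tsum hterm
    _ = (∑' n, μ (E (n + 1) \ E n)) / c := by simp_rw [div_eq_mul_inv, ENNReal.tsum_mul_right]
    _ ≤ μ Set.univ / c :=
      ENNReal.div_le_div_right (hmono.tsum_measure_diff_succ_le_measure_univ μ hmeas) _
    _ < ∞ := ENNReal.div_lt_top (measure_ne_top μ _) hc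
  exact lt_irrefl _ this

theorem stmt5_general {Ω : Type*} [MeasurableSpace Ω] (μ : Measure Ω) [IsProbabilityMeasure μ]
    (E : ℕ → Set Ω) (hmeas : ∀ n, MeasurableSet (E n))
    (hmono : Monotone E)
    (hdiv : ∑' n : ℕ, μ (E (n + 1) ∩ (E n)ᶜ) / μ ((E n)ᶜ) = ⊤) :
    μ (⋃ n, E n) = 1 :=
  (prob_compl_eq_zero_iff (MeasurableSet.iUnion hmeas)).1
    (hmono.measure_compl_iUnion_eq_zero_of_tsum_div_eq_top μ hmeas hdiv)

/-- Borel–Cantelli counterpart: if `(E_n)` is an increasing sequence of events with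
`E_0 = ∅` and `∑_{n≥1} P(E_n | E_{n-1}ᶜ) = ∞`, then `P(⋃ E_n) = 1`. -/
theorem stmt5 {Ω : Type*} [MeasurableSpace Ω] (μ : Measure Ω) [IsProbabilityMeasure μ]
    (E : ℕ → Set Ω) (hmeas : ∀ n, MeasurableSet (E n)) (h0 : E 0 = ∅)
    (hmono : Monotone E)
    (hdiv : ∑' n : ℕ, μ (E (n + 1) ∩ (E n)ᶜ) / μ ((E n)ᶜ) = ⊤) :
    μ (⋃ n, E n) = 1 :=
  stmt5_general μ E hmeas hmono hdiv
end

section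
/- Let S be a finite set of pairs (x,y) of reals in [e^{−k−1}, e^{−k}] with y/x ≤ Ψ² for each pair, x ≤ b for each pair, and such that distinct pairs span disjoint open intervals (y,x) ⊆ [e^{−k−1}, b]. If the pairs are enumerated in decreasing order as (x_1,y_1),…,(x_ℓ,y_ℓ), then y_i ≤ Ψ^i·b for every 1 ≤ i ≤ ℓ, and consequently ℓ ≤ ⌈−1/log Ψ⌉. -/
/-- If `(x_1,y_1),…,(x_ℓ,y_ℓ)` are pairs in `[e^{-k-1}, e^{-k}]` listed in decreasing
order, each with ratio `y_i/x_i ≤ Ψ²` and `x_i ≤ b`, spanning disjoint intervals, then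
`y_i ≤ Ψ^i b` for every `1 ≤ i ≤ ℓ`, and consequently `ℓ ≤ ⌈-1/log Ψ⌉`. -/
theorem stmt9 (k : ℕ) (hk : 1 ≤ k) (Ψ : ℝ) (hΨ0 : 0 < Ψ) (hΨ1 : Ψ < 1)
    (b : ℝ) (hb : b ∈ Set.Ioc (Real.exp (-(k + 1 : ℝ))) (Real.exp (-(k : ℝ))))
    (ℓ : ℕ) (x y : ℕ → ℝ)
    (hlow : ∀ i, 1 ≤ i → i ≤ ℓ → Real.exp (-(k + 1 : ℝ)) ≤ y i)
    (horder : ∀ i, 1 ≤ i → i ≤ ℓ → y i < x i)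
    (hupper : ∀ i, 1 ≤ i → i ≤ ℓ → x i ≤ b)
    (hratio : ∀ i, 1 ≤ i → i ≤ ℓ → y i ≤ Ψ ^ 2 * x i)
    (hdecr : ∀ i, 1 ≤ i → i + 1 ≤ ℓ → x (i + 1) ≤ y i) :
    (∀ i, 1 ≤ i → i ≤ ℓ → y i ≤ Ψ ^ i * b) ∧ ℓ ≤ ⌈(-1) / Real.log Ψ⌉₊ := by
  obtain ⟨hb1, hb2⟩ := hb
  have hbpos : 0 < b := lt_trans (Real.exp_pos _) hb1
  have key : ∀ i, 1 ≤ i → i ≤ ℓ → y i ≤ Ψ ^ i * b := by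
    intro i
    induction i with
    | zero => intro h; omega
    | succ n ih =>
      intro _ hle
      rcases Nat.eq_zero_or_pos n with hn | hn
      · subst hn
        have h1 := hratio 1 le_rfl hle
        have h2 := hupper 1 le_rfl hle
        calc y 1 ≤ Ψ ^ 2 * x 1 := h1
          _ ≤ Ψ ^ 2 * b := by nlinarith
          _ ≤ Ψ ^ 1 * b := by
              have hΨ2 : Ψ ^ 2 ≤ Ψ ^ 1 := pow_le_pow_of_le_one hΨ0.le hΨ1.le (by norm_num)
              exact mul_le_mul_of_nonneg_right hΨ2 hbpos.le
      · have hnl : n ≤ ℓ := by omega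
        have ihn := ih hn hnl
        have h1 := hratio (n + 1) (by omega) hle
        have h2 := hdecr n hn hle
        have hΨn : 0 < Ψ ^ n := pow_pos hΨ0 n
        calc y (n + 1) ≤ Ψ ^ 2 * x (n + 1) := h1
          _ ≤ Ψ ^ 2 * y n := by nlinarith
          _ ≤ Ψ ^ 2 * (Ψ ^ n * b) := by nlinarith
          _ ≤ Ψ ^ (n + 1) * b := by
              have : Ψ ^ 2 * (Ψ ^ n * b) = Ψ * (Ψ ^ (n + 1) * b) := by ring
              rw [this]
              have h3 : 0 < Ψ ^ (n + 1) * b := by positivity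
              nlinarith
  refine ⟨key, ?_⟩
  rcases Nat.eq_zero_or_pos ℓ with h0 | h0
  · simp [h0]
  · have h1 := hlow ℓ h0 le_rfl
    have h2 := key ℓ h0 le_rfl
    have h3 : Real.exp (-(k + 1 : ℝ)) ≤ Ψ ^ ℓ * Real.exp (-(k : ℝ)) := by
      have hΨl : 0 < Ψ ^ ℓ := pow_pos hΨ0 ℓ
      calc Real.exp (-(k + 1 : ℝ)) ≤ y ℓ := h1
        _ ≤ Ψ ^ ℓ * b := h2
        _ ≤ Ψ ^ ℓ * Real.exp (-(k : ℝ)) := by nlinarith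
    have h4 : Real.exp (-1 : ℝ) ≤ Ψ ^ ℓ := by
      have := Real.exp_pos (-(k : ℝ))
      have heq : Real.exp (-(k + 1 : ℝ)) = Real.exp (-1 : ℝ) * Real.exp (-(k : ℝ)) := by
        rw [← Real.exp_add]; ring_nf
      rw [heq] at h3
      exact le_of_mul_le_mul_right (by linarith [h3]) this
    have hlogΨ : Real.log Ψ < 0 := Real.log_neg hΨ0 hΨ1
    have h5 : (-1 : ℝ) ≤ ℓ * Real.log Ψ := by
      have := Real.log_le_log (Real.exp_pos _) h4
      rw [Real.log_exp, Real.log_pow] at this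
      linarith
    have h6 : (ℓ : ℝ) ≤ (-1) / Real.log Ψ := by
      rw [le_div_iff_of_neg hlogΨ]
      linarith
    calc ℓ = ⌈(ℓ : ℝ)⌉₊ := (Nat.ceil_natCast ℓ).symm
      _ ≤ ⌈(-1) / Real.log Ψ⌉₊ := Nat.ceil_le_ceil h6
end

section
/- Let (z_n)_{n≥0} be a sequence of strictly positive reals with liminf_{n→∞} (1/n)·log(1/z_n) > 0. Then there exists α ∈ (0,1) such that for infinitely many n, z_n = min_{0≤m≤n} z_m and z_n ≤ α·min_{0≤m≤n−1} z_m. -/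
/-!
If only finitely many `n` satisfied `z n ≤ α * z m` for all `m < n`, then beyond them every term
would exceed `α` times some earlier one, and strong induction would give a geometric lower bound
`C * α ^ n ≤ z n`. A positive liminf of `log (1 / z n) / n` gives `z n ≤ exp (-c) ^ n` eventually
for some `c > 0`, and the choice `α = exp (-c / 2)` makes the two bounds incompatible.
-/

open Filter Real

def ratioRecordTimes (z : ℕ → ℝ) (α : ℝ) : Set ℕ :=
  {n | ∀ m < n, z n ≤ α * z m}

lemma le_of_mem_ratioRecordTimes {z : ℕ → ℝ} {α : ℝ} {m n : ℕ} (hnonneg : ∀ k, 0 ≤ z k)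
    (hα : α ≤ 1) (hn : n ∈ ratioRecordTimes z α) (hmn : m ≤ n) : z n ≤ z m := by
  rcases hmn.eq_or_lt with rfl | hmn
  · exact le_rfl
  · exact (hn m hmn).trans (mul_le_of_le_one_left (hnonneg m) hα)

lemma exists_mul_pow_le_of_ratioRecordTimes_finite {z : ℕ → ℝ} {α : ℝ} (hpos : ∀ n, 0 < z n)
    (hα0 : 0 < α) (hα1 : α ≤ 1) (hfin : (ratioRecordTimes z α).Finite) :
    ∃ C > 0, ∀ n, C * α ^ n ≤ z n := by
  obtain ⟨N, hN⟩ := hfin.bddAbove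
  set C := (Finset.range (N + 1)).inf' Finset.nonempty_range_add_one fun k => z k / α ^ k
  have hC : 0 < C := (Finset.lt_inf'_iff _).2 fun k _ => div_pos (hpos k) (pow_pos hα0 k)
  refine ⟨C, hC, fun n => ?_⟩
  induction n using Nat.strong_induction_on with
  | _ n ih =>
    rcases le_or_gt n N with hnN | hNn
    · rw [← le_div_iff₀ (pow_pos hα0 n)]
      exact Finset.inf'_le _ (Finset.mem_range_succ_iff.2 hnN)
    · obtain ⟨m, hmn, hzm⟩ : ∃ m < n, α * z m < z n := by
        by_contra! h
        exact (hN h).not_gt hNn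
      calc C * α ^ n ≤ C * α ^ (m + 1) :=
            mul_le_mul_of_nonneg_left (pow_le_pow_of_le_one hα0.le hα1 hmn) hC.le
        _ = α * (C * α ^ m) := by ring
        _ ≤ α * z m := by gcongr; exact ih m hmn
        _ ≤ z n := hzm.le

lemma eventually_pow_lt_mul_pow {β α C : ℝ} (hβ : 0 ≤ β) (hβα : β < α) (hC : 0 < C) :
    ∀ᶠ n : ℕ in atTop, β ^ n < C * α ^ n := by
  have hα : 0 < α := hβ.trans_lt hβα
  have hratio : Tendsto (fun n : ℕ => (β / α) ^ n) atTop (nhds 0) :=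
    tendsto_pow_atTop_nhds_zero_of_lt_one (by positivity) ((div_lt_one hα).2 hβα)
  filter_upwards [hratio.eventually (gt_mem_nhds hC)] with n hn
  rwa [div_pow, div_lt_iff₀ (pow_pos hα n)] at hn

theorem ratioRecordTimes_infinite {z : ℕ → ℝ} {α β : ℝ} (hpos : ∀ n, 0 < z n) (hβ : 0 ≤ β)
    (hβα : β < α) (hα : α ≤ 1) (hz : ∀ᶠ n in atTop, z n ≤ β ^ n) :
    (ratioRecordTimes z α).Infinite := by
  intro hfin
  obtain ⟨C, hC, hlower⟩ :=
    exists_mul_pow_le_of_ratioRecordTimes_finite hpos (hβ.trans_lt hβα) hα hfin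
  obtain ⟨n, hzn, hlt⟩ := (hz.and (eventually_pow_lt_mul_pow hβ hβα hC)).exists
  exact (hlower n).not_gt (hzn.trans_lt hlt)

lemma exists_pos_eventually_lt_of_pos_liminf {ι : Type*} {f : Filter ι} {u : ι → ℝ}
    (h : 0 < liminf u f) : ∃ c > 0, ∀ᶠ i in f, c < u i := by
  -- otherwise `liminf u f` would be the junk value `0`
  have hu : f.IsBoundedUnder (· ≥ ·) u := by
    by_contra hu
    exact h.ne' (Real.liminf_of_not_isBoundedUnder hu)
  obtain ⟨c, hc0, hc⟩ := exists_between h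
  exact ⟨c, hc0, eventually_lt_of_lt_liminf hc hu⟩

lemma le_exp_neg_pow_of_lt_log_one_div {x c : ℝ} {n : ℕ} (hx : 0 < x) (hn : 0 < n)
    (h : c < log (1 / x) / n) : x ≤ exp (-c) ^ n := by
  rw [lt_div_iff₀ (by exact_mod_cast hn), one_div, log_inv] at h
  rw [← exp_nat_mul, ← log_le_iff_le_exp hx]
  linarith

/-- A positive real sequence with `liminf (1/n) log(1/z_n) > 0` has some `α ∈ (0,1)`
such that for infinitely many `n`, `z_n` is the running minimum and is at most `α`
times the previous running minimum. -/
theorem stmt15 (z : ℕ → ℝ) (hpos : ∀ n, 0 < z n)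
    (hdecay : 0 < liminf (fun n : ℕ => Real.log (1 / z n) / n) atTop) :
    ∃ α : ℝ, 0 < α ∧ α < 1 ∧
      {n : ℕ | (∀ m ≤ n, z n ≤ z m) ∧ ∀ m < n, z n ≤ α * z m}.Infinite := by
  obtain ⟨c, hc, hlog⟩ := exists_pos_eventually_lt_of_pos_liminf hdecay
  have hα1 : exp (-(c / 2)) < 1 := exp_lt_one_iff.2 (by linarith)
  have hz : ∀ᶠ n in atTop, z n ≤ exp (-c) ^ n := by
    filter_upwards [hlog, eventually_gt_atTop 0] with n hn hn0
    exact le_exp_neg_pow_of_lt_log_one_div (hpos n) hn0 hn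
  refine ⟨exp (-(c / 2)), exp_pos _, hα1, ?_⟩
  have hrec := ratioRecordTimes_infinite hpos (exp_pos _).le (exp_lt_exp.2 (by linarith)) hα1.le hz
  exact hrec.mono fun n hn =>
    ⟨fun m hmn => le_of_mem_ratioRecordTimes (fun k => (hpos k).le) hα1.le hn hmn, hn⟩
end

section
/- Let φ : (0,∞) → (0,∞) be given by φ(x) = log Φ̃(x) where Φ̃(x) = Φ((x+M)⁴)·e^{−√(log(x+2))} with Φ : [0,∞) → (0,1] a decreasing differentiable log-convex bijection and M ≥ 2. Then −(d/dx) log Φ̃(x) ≥ 1/(2(x+2)√(log(x+2))) for all x ≥ 0. -/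
/-!
`log Φ̃(t) = log Φ((t+M)⁴) - √(log(t+2))`, and the first summand is nonincreasing near `x`
(`Φ` decreases and `(t+M)⁴` increases for `t ≥ -M`), so its derivative is `≤ 0`: the decay
rate of `Φ̃` is at least that of `e^{-√(log(t+2))}`, which is `1/(2(x+2)√(log(x+2)))`.
-/

open Real Topology

lemma le_neg_deriv_log_mul_exp_neg {g h : ℝ → ℝ} {s : Set ℝ} {x a : ℝ}
    (hpos : ∀ t, 0 < g t) (hanti : AntitoneOn g s) (hs : s ∈ 𝓝 x)
    (hg : DifferentiableAt ℝ g x) (hh : HasDerivAt h a x) :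
    a ≤ -deriv (fun t => log (g t * exp (-h t))) x := by
  have hsplit : (fun t => log (g t * exp (-h t))) = fun t => log (g t) - h t := by
    funext t
    rw [log_mul (hpos t).ne' (exp_ne_zero _), log_exp, sub_eq_add_neg]
  have hlog_anti : AntitoneOn (fun t => log (g t)) s := fun u hu v hv huv =>
    log_le_log (hpos v) (hanti hu hv huv)
  have hlog_deriv : deriv (fun t => log (g t)) x ≤ 0 := by
    rw [← derivWithin_of_mem_nhds hs]
    exact hlog_anti.derivWithin_nonpos
  rw [hsplit, ((hg.log (hpos x).ne').hasDerivAt.fun_sub hh).deriv]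
  linarith

lemma hasDerivAt_sqrt_log_add {c x : ℝ} (hx : 1 < x + c) :
    HasDerivAt (fun t => √(log (t + c))) (1 / (2 * (x + c) * √(log (x + c)))) x := by
  have hlog := ((hasDerivAt_id' x).add_const c).log (by linarith)
  convert hlog.sqrt (log_pos hx).ne' using 1
  field_simp

lemma antitoneOn_comp_add_pow_four {Φ : ℝ → ℝ} (hanti : AntitoneOn Φ (Set.Ici 0)) (M : ℝ) :
    AntitoneOn (fun t => Φ ((t + M) ^ 4)) (Set.Ici (-M)) := by
  refine hanti.comp_MonotoneOn (f := fun t => (t + M) ^ 4) ?_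
    fun t _ => Set.mem_Ici.2 (by positivity)
  intro u hu v _ huv
  have hu' : 0 ≤ u + M := by simp only [Set.mem_Ici] at hu; linarith
  exact pow_le_pow_left₀ hu' (by linarith) 4

theorem stmt17_general (Φ : ℝ → ℝ) (M : ℝ) (hM : 2 ≤ M)
    (hanti : StrictAntiOn Φ (Set.Ici 0))
    (hdiff : DifferentiableOn ℝ Φ (Set.Ici 0))
    (hbij : Set.BijOn Φ (Set.Ici 0) (Set.Ioc 0 1))
    (x : ℝ) (hx : 0 ≤ x) :
    1 / (2 * (x + 2) * Real.sqrt (Real.log (x + 2))) ≤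
      -deriv (fun t => Real.log
        (Φ ((t + M) ^ 4) * Real.exp (-Real.sqrt (Real.log (t + 2))))) x := by
  have hpos : ∀ t : ℝ, 0 < Φ ((t + M) ^ 4) := fun t =>
    (hbij.mapsTo (by positivity : (0 : ℝ) ≤ (t + M) ^ 4)).1
  have hΦ_diff : DifferentiableAt ℝ Φ ((x + M) ^ 4) :=
    hdiff.differentiableAt (Ici_mem_nhds (by positivity))
  exact le_neg_deriv_log_mul_exp_neg hpos (antitoneOn_comp_add_pow_four hanti.antitoneOn M)
    (Ici_mem_nhds (by linarith)) (hΦ_diff.comp x (by fun_prop))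
    (hasDerivAt_sqrt_log_add (by linarith))

/-- With `Φ : [0,∞) → (0,1]` a decreasing differentiable bijection, log-convex on
`[M,∞)` with `M ≥ 2`, and `Φ̃(x) = Φ((x+M)⁴)·e^{-√(log(x+2))}`, one has
`-(d/dx) log Φ̃(x) ≥ 1/(2(x+2)√(log(x+2)))` for all `x ≥ 0`. -/
theorem stmt17 (Φ : ℝ → ℝ) (M : ℝ) (hM : 2 ≤ M)
    (hanti : StrictAntiOn Φ (Set.Ici 0))
    (hdiff : DifferentiableOn ℝ Φ (Set.Ici 0))
    (hbij : Set.BijOn Φ (Set.Ici 0) (Set.Ioc 0 1))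
    (hlogconvex : ConvexOn ℝ (Set.Ici M) (fun x => Real.log (Φ x)))
    (x : ℝ) (hx : 0 ≤ x) :
    1 / (2 * (x + 2) * Real.sqrt (Real.log (x + 2))) ≤
      -deriv (fun t => Real.log
        (Φ ((t + M) ^ 4) * Real.exp (-Real.sqrt (Real.log (t + 2))))) x :=
  stmt17_general Φ M hM hanti hdiff hbij x hx
end

section
/- Let g : [0,∞) → (0,∞) be a differentiable, strictly decreasing, log-convex function with g(x) → 0 as x → ∞, and suppose ∫₀^{g(N−1)} du/(u·log g⁻¹(u)) < ∞ for some N ≥ 3 with g(N−1) < 1. Then ∑_{n=N}^∞ (g(n) − g(n+1))/(g(n)·log n) < ∞. -/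
open MeasureTheory Filter Set

/-!
On the interval `(g (n+1), g n)` the inverse `g⁻¹ u` lies in `(n, n+1)`, so the integrand
`1 / (u log g⁻¹(u))` is at least `1 / (g n · log (n+1))`. The intervals are disjoint and lie in
`(0, g (N-1))`, so the integral dominates `∑ (g n - g (n+1)) / (g n · log (n+1))`; finally
`log (n+1) ≤ 2 log n`.
-/

lemma Real.log_add_one_le_two_mul_log {x : ℝ} (hx : 2 ≤ x) :
    Real.log (x + 1) ≤ 2 * Real.log x := by
  have hsq : Real.log (x ^ 2) = 2 * Real.log x := by
    rw [Real.log_pow]; push_cast; ring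
  rw [← hsq]
  exact Real.log_le_log (by linarith) (by nlinarith)

lemma Summable.of_tsum_ofReal_ne_top {α : Type*} {f : α → ℝ} (hf : ∀ i, 0 ≤ f i)
    (h : ∑' i, ENNReal.ofReal (f i) ≠ ⊤) : Summable f :=
  (ENNReal.summable_toReal h).congr fun i => ENNReal.toReal_ofReal (hf i)

lemma Antitone.tsum_ofReal_sub_mul_le_setLIntegral {a c : ℕ → ℝ} (ha : Antitone a)
    {S : Set ℝ} (hS : ∀ n, Ioo (a (n + 1)) (a n) ⊆ S) {f : ℝ → ENNReal}
    (hc : ∀ n, ∀ u ∈ Ioo (a (n + 1)) (a n), ENNReal.ofReal (c n) ≤ f u) :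
    ∑' n, ENNReal.ofReal ((a n - a (n + 1)) * c n) ≤ ∫⁻ u in S, f u := by
  have hdisj : Pairwise (Function.onFun Disjoint fun n => Ioo (a (n + 1)) (a n)) := by
    simpa only [Order.succ_eq_add_one] using ha.pairwise_disjoint_on_Ioo_succ
  calc ∑' n, ENNReal.ofReal ((a n - a (n + 1)) * c n)
      = ∑' n, ∫⁻ _ in Ioo (a (n + 1)) (a n), ENNReal.ofReal (c n) := by
        congr 1 with n
        rw [setLIntegral_const, Real.volume_Ioo,
          ENNReal.ofReal_mul (sub_nonneg.2 (ha n.le_succ)), mul_comm]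
    _ ≤ ∑' n, ∫⁻ u in Ioo (a (n + 1)) (a n), f u :=
        ENNReal.tsum_le_tsum fun n => setLIntegral_mono' measurableSet_Ioo (hc n)
    _ = ∫⁻ u in ⋃ n, Ioo (a (n + 1)) (a n), f u :=
        (lintegral_iUnion (fun _ => measurableSet_Ioo) hdisj f).symm
    _ ≤ ∫⁻ u in S, f u := lintegral_mono_set (iUnion_subset hS)

lemma sub_div_mul_log_le_two_mul {a b x : ℝ} (hba : b ≤ a) (ha : 0 < a) (hx : 2 ≤ x) :
    (a - b) / (a * Real.log x) ≤ 2 * ((a - b) / (a * Real.log (x + 1))) := by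
  have hgap : 0 ≤ a - b := sub_nonneg.2 hba
  have hlog := Real.log_pos (by linarith : (1:ℝ) < x + 1)
  calc (a - b) / (a * Real.log x) ≤ (a - b) / (a * (Real.log (x + 1) / 2)) := by
        gcongr
        linarith [Real.log_add_one_le_two_mul_log hx]
    _ = 2 * ((a - b) / (a * Real.log (x + 1))) := by field_simp

section

variable {g ginv : ℝ → ℝ} (hpos : ∀ x ∈ Ici (0:ℝ), 0 < g x)
  (hanti : StrictAntiOn g (Ici 0))
  (hginv : ∀ u ∈ Ioc (0:ℝ) (g 0), ginv u ∈ Ici (0:ℝ) ∧ g (ginv u) = u)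
include hpos hanti hginv

lemma one_div_mul_log_le_of_mem_Ioo {x u : ℝ} (hx : 1 ≤ x) (hu : u ∈ Ioo (g (x + 1)) (g x)) :
    1 / (g x * Real.log (x + 1)) ≤ 1 / (u * Real.log (ginv u)) := by
  have hx0 : x ∈ Ici (0:ℝ) := mem_Ici.2 (by linarith)
  have hx1 : x + 1 ∈ Ici (0:ℝ) := mem_Ici.2 (by linarith)
  have hu0 : 0 < u := (hpos _ hx1).trans hu.1
  obtain ⟨hy0, hgy⟩ := hginv u
    ⟨hu0, hu.2.le.trans (hanti.antitoneOn self_mem_Ici hx0 (mem_Ici.1 hx0))⟩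
  have hxy : x < ginv u := (hanti.lt_iff_gt hy0 hx0).1 (by rw [hgy]; exact hu.2)
  have hyx : ginv u < x + 1 := (hanti.lt_iff_gt hx1 hy0).1 (by rw [hgy]; exact hu.1)
  have hlog : 0 < Real.log (ginv u) := Real.log_pos (by linarith)
  exact one_div_le_one_div_of_le (by positivity)
    (mul_le_mul hu.2.le (Real.log_le_log (by linarith) hyx.le) hlog.le (hpos x hx0).le)

lemma summable_sub_div_mul_log_add_one {N : ℕ} (hN : 1 ≤ N)
    (hint : ∫⁻ u in Ioo 0 (g N), ENNReal.ofReal (1 / (u * Real.log (ginv u))) < ⊤) :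
    Summable fun n : ℕ => (g ((N + n : ℕ)) - g ((N + n + 1 : ℕ))) /
      (g ((N + n : ℕ)) * Real.log ((N + n + 1 : ℕ))) := by
  set a : ℕ → ℝ := fun n => g ((N + n : ℕ))
  have hmem (m : ℕ) : (m : ℝ) ∈ Ici (0:ℝ) := mem_Ici.2 m.cast_nonneg
  have ha : Antitone a := fun i j hij => hanti.antitoneOn (hmem _) (hmem _) (by gcongr)
  have hNn (n : ℕ) : (1:ℝ) ≤ ((N + n : ℕ) : ℝ) := by
    exact_mod_cast hN.trans (N.le_add_right n)
  have hpieces (n : ℕ) : Ioo (a (n + 1)) (a n) ⊆ Ioo 0 (g N) := fun u hu =>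
    ⟨(hpos _ (hmem _)).trans hu.1,
      hu.2.trans_le (hanti.antitoneOn (hmem _) (hmem _) (by exact_mod_cast N.le_add_right n))⟩
  have hc (n : ℕ) (u : ℝ) (hu : u ∈ Ioo (a (n + 1)) (a n)) :
      ENNReal.ofReal (1 / (a n * Real.log ((N + n + 1 : ℕ)))) ≤
        ENNReal.ofReal (1 / (u * Real.log (ginv u))) := by
    refine ENNReal.ofReal_le_ofReal ?_
    simpa [a, add_assoc] using one_div_mul_log_le_of_mem_Ioo hpos hanti hginv (hNn n)
      (by simpa [a, add_assoc] using hu)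
  have hterm_nonneg (n : ℕ) : 0 ≤ (a n - a (n + 1)) / (a n * Real.log ((N + n + 1 : ℕ))) :=
    div_nonneg (sub_nonneg.2 (ha n.le_succ)) (mul_nonneg (hpos _ (hmem _)).le
      (Real.log_nonneg (by push_cast; linarith [hNn n])))
  have hfinite := (ha.tsum_ofReal_sub_mul_le_setLIntegral hpieces hc).trans_lt hint
  simp_rw [← div_eq_mul_one_div] at hfinite
  exact Summable.of_tsum_ofReal_ne_top hterm_nonneg hfinite.ne

end

theorem stmt18_general (g ginv : ℝ → ℝ)
    (hpos : ∀ x ∈ Set.Ici (0:ℝ), 0 < g x)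
    (hanti : StrictAntiOn g (Set.Ici 0))
    (hginv : ∀ u ∈ Set.Ioc (0:ℝ) (g 0), ginv u ∈ Set.Ici (0:ℝ) ∧ g (ginv u) = u)
    (N : ℕ) (hN : 3 ≤ N)
    (hint : ∫⁻ u in Set.Ioo (0:ℝ) (g ((N : ℝ) - 1)),
        ENNReal.ofReal (1 / (u * Real.log (ginv u))) < ⊤) :
    Summable (fun n : ℕ =>
      (g ((N + n : ℕ)) - g ((N + n + 1 : ℕ))) /
        (g ((N + n : ℕ)) * Real.log ((N + n : ℕ)))) := by
  have hN' : (3:ℝ) ≤ N := by exact_mod_cast hN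
  have hmem (m : ℕ) : (m : ℝ) ∈ Ici (0:ℝ) := mem_Ici.2 m.cast_nonneg
  have hint' : ∫⁻ u in Ioo 0 (g N), ENNReal.ofReal (1 / (u * Real.log (ginv u))) < ⊤ :=
    (lintegral_mono_set (Ioo_subset_Ioo_right (hanti.antitoneOn (mem_Ici.2 (by linarith))
      (hmem N) (by linarith)))).trans_lt hint
  have hterm (n : ℕ) : (2:ℝ) ≤ ((N + n : ℕ) : ℝ) ∧ 0 < g ((N + n : ℕ)) ∧
      g ((N + n + 1 : ℕ)) ≤ g ((N + n : ℕ)) :=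
    ⟨by exact_mod_cast (by omega : 2 ≤ N + n), hpos _ (hmem _),
      hanti.antitoneOn (hmem _) (hmem _) (Nat.cast_le.2 (N + n).le_succ)⟩
  refine .of_nonneg_of_le (fun n => ?_) (fun n => ?_)
    ((summable_sub_div_mul_log_add_one hpos hanti hginv (by omega) hint').mul_left 2) <;>
    obtain ⟨hx, hg, hgap⟩ := hterm n
  · exact div_nonneg (sub_nonneg.2 hgap) (mul_nonneg hg.le (Real.log_nonneg (by linarith)))
  · simpa only [Nat.cast_succ] using sub_div_mul_log_le_two_mul hgap hg hx

/-- Let `g : [0,∞) → (0,∞)` be differentiable, strictly decreasing, log-convex with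
`g(x) → 0`, and suppose `∫₀^{g(N-1)} du/(u log g⁻¹(u)) < ∞` for some integer `N ≥ 3`
with `g(N-1) < 1`. Then `∑_{n=N}^∞ (g(n)-g(n+1))/(g(n) log n) < ∞`. -/
theorem stmt18 (g ginv : ℝ → ℝ)
    (hpos : ∀ x ∈ Set.Ici (0:ℝ), 0 < g x)
    (hdiff : DifferentiableOn ℝ g (Set.Ici 0))
    (hanti : StrictAntiOn g (Set.Ici 0))
    (hlogconvex : ConvexOn ℝ (Set.Ici 0) (fun x => Real.log (g x)))
    (hlim : Tendsto g atTop (nhds 0))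
    (hginv : ∀ u ∈ Set.Ioc (0:ℝ) (g 0), ginv u ∈ Set.Ici (0:ℝ) ∧ g (ginv u) = u)
    (N : ℕ) (hN : 3 ≤ N) (hgN : g ((N : ℝ) - 1) < 1)
    (hint : ∫⁻ u in Set.Ioo (0:ℝ) (g ((N : ℝ) - 1)),
        ENNReal.ofReal (1 / (u * Real.log (ginv u))) < ⊤) :
    Summable (fun n : ℕ =>
      (g ((N + n : ℕ)) - g ((N + n + 1 : ℕ))) /
        (g ((N + n : ℕ)) * Real.log ((N + n : ℕ)))) :=
  stmt18_general g ginv hpos hanti hginv N hN hint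
end
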